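/- arXiv:2206.01557 — 2 statements merged into one kernel-verified Lean document; each statement's English description precedes it below -/
import Mathlib

section
/- Let u : ℕ → Σ be an infinite word over a finite alphabet. The following are equivalent: (i) u is uniformly recurrent; (ii) Fac(u) is inexhaustible and is well-quasi-ordered by the factor order; (iii) Fac(u) is infinite and every proper subset of Fac(u) that is downward closed for the factor order is finite. -/
/-!
Call a factor `v` of `u` uniformly recurrent when every long enough factor of `u` contains it; as
there are finitely many factors of each length, `u` is uniformly recurrent iff all its factors are.

A factor `v` is uniformly recurrent iff the factors avoiding it, which form a proper downward
closed subset of `Fac(u)`, are finitely many: this gives (i) ⇔ (iii). If all factors are uniformly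
recurrent, a sequence of factors either has a term long enough to contain its first term or stays
in a finite set, so `Fac(u)` is well-quasi-ordered; and each occurrence of `v` is followed by
another one within bounded distance, so `Fac(u)` is inexhaustible.

Conversely, inexhaustibility makes every factor `v` occur infinitely often. If `v` is not uniformly
recurrent, the gaps between consecutive occurrences of `v` are unbounded, which gives arbitrarily
long complete return words to `v` (factors that start and end with `v` and contain no other
occurrence of it). None of them is a factor of another, so they form an infinite antichain,
contradicting well-quasi-order.
-/

/-- The set of finite factors of the infinite word `u : ℕ → A`. -/
def FacN {A : Type*} (u : ℕ → A) : Set (List A) :=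
  {v | ∃ i : ℕ, v = (List.range v.length).map fun k => u (i + k)}

/-- A set `S` is well-quasi-ordered by the relation `r` if every infinite sequence of
elements of `S` contains an infinite increasing subsequence. -/
def WqoOn {A : Type*} (r : A → A → Prop) (S : Set A) : Prop :=
  ∀ f : ℕ → A, (∀ n, f n ∈ S) →
    ∃ g : ℕ → ℕ, StrictMono g ∧ ∀ m n, m < n → r (f (g m)) (f (g n))

/-- A set of finite words, not reduced to the empty word, is inexhaustible if for every
`v ∈ C` there exists a word `w` such that `v ++ w ++ v ∈ C`. -/
def Inexh {A : Type*} (C : Set (List A)) : Prop :=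
  C.Nonempty ∧ C ≠ {[]} ∧ ∀ v ∈ C, ∃ w : List A, v ++ w ++ v ∈ C

/-- `u` is uniformly recurrent. -/
def UnifRec {A : Type*} (u : ℕ → A) : Prop :=
  ∀ n : ℕ, ∃ m : ℕ, ∀ v ∈ FacN u, v.length = n → ∀ w ∈ FacN u, w.length = m → v <:+: w

open Set

lemma wqoOn_iff_partiallyWellOrderedOn {α : Type*} {r : α → α → Prop} [IsPreorder α r]
    {s : Set α} : WqoOn r s ↔ s.PartiallyWellOrderedOn r := by
  refine ⟨fun h => partiallyWellOrderedOn_iff_exists_lt.mpr fun f hf => ?_, fun h f hf => ?_⟩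
  · obtain ⟨g, hg, hr⟩ := h f hf
    exact ⟨g 0, g 1, hg zero_lt_one, hr 0 1 zero_lt_one⟩
  · obtain ⟨g, hg⟩ := h.exists_monotone_subseq hf
    exact ⟨g, g.strictMono, fun m n hmn => hg m n hmn.le⟩

lemma Nat.exists_consecutive_around {P : ℕ → Prop} {a b j : ℕ} (ha : P a) (hb : P b)
    (haj : a < j) (hjb : j ≤ b) :
    ∃ p q, p < j ∧ j ≤ q ∧ P p ∧ P q ∧ ∀ r, p < r → r < q → ¬ P r := by
  classical
  have hex : ∃ q, j ≤ q ∧ P q := ⟨b, hjb, hb⟩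
  refine ⟨Nat.findGreatest P (j - 1), Nat.find hex, ?_, (Nat.find_spec hex).1,
    Nat.findGreatest_spec (m := a) (by omega) ha, (Nat.find_spec hex).2, fun r hpr hrq hr => ?_⟩
  · have := Nat.findGreatest_le (P := P) (j - 1)
    omega
  · rcases lt_or_ge r j with hrj | hrj
    · exact Nat.findGreatest_is_greatest hpr (by omega) hr
    · exact Nat.find_min hex hrq ⟨hrj, hr⟩

section Words

variable {A : Type*}

def window (u : ℕ → A) (i n : ℕ) : List A := (List.range n).map fun k => u (i + k)

def UnifRecAt (u : ℕ → A) (v : List A) : Prop :=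
  ∃ m, ∀ w ∈ FacN u, m ≤ w.length → v <:+: w

def IsCompleteReturnWord (v r : List A) : Prop :=
  v <+: r ∧ v <:+ r ∧ v.length < r.length ∧ ∀ s t, r = s ++ v ++ t → s = [] ∨ t = []

lemma IsCompleteReturnWord.eq_of_infix {v r r' : List A} (hr : IsCompleteReturnWord v r)
    (hr' : IsCompleteReturnWord v r') (h : r <:+: r') : r = r' := by
  obtain ⟨⟨x, rfl⟩, ⟨y, hy⟩, hlen, -⟩ := hr
  obtain ⟨s, t, rfl⟩ := h
  have hx : x ≠ [] := by rintro rfl; simp at hlen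
  have hs : s = [] := (hr'.2.2.2 s (x ++ t) (by simp)).resolve_right (by simp [hx])
  have hy' : y ≠ [] := by rintro rfl; simp [hx] at hy
  have ht : t = [] := (hr'.2.2.2 (s ++ y) t (by simp [← hy])).resolve_left (by simp [hy'])
  simp [hs, ht]

section Window

variable (u : ℕ → A)

@[simp] lemma length_window (i n : ℕ) : (window u i n).length = n := by
  simp [window]

lemma window_add (i m n : ℕ) : window u i (m + n) = window u i m ++ window u (i + m) n := by
  simp [window, List.range_add, Function.comp_def, add_assoc]

lemma window_mem_facN (i n : ℕ) : window u i n ∈ FacN u :=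
  ⟨i, by rw [length_window]; rfl⟩

lemma facN_infinite : (FacN u).Infinite :=
  infinite_of_injective_forall_mem (fun m n h => by simpa using congrArg List.length h)
    (window_mem_facN u 0)

variable {u}

lemma mem_facN_iff {v : List A} : v ∈ FacN u ↔ ∃ i, window u i v.length = v :=
  exists_congr fun _ => eq_comm

lemma window_eq_append {i n : ℕ} {a b : List A} (h : window u i n = a ++ b) :
    window u i a.length = a ∧ window u (i + a.length) b.length = b := by
  obtain rfl : n = a.length + b.length := by simpa using congrArg List.length h
  rw [window_add] at h
  exact List.append_inj h (by simp)

lemma window_eq_of_eq_append {i n : ℕ} {s v t : List A} (h : window u i n = s ++ v ++ t) :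
    window u (i + s.length) v.length = v :=
  (window_eq_append (window_eq_append (h.trans (List.append_assoc ..))).2).1

lemma window_infix_window {i m t n : ℕ} (h : t + n ≤ m) :
    window u (i + t) n <:+: window u i m := by
  obtain ⟨k, rfl⟩ := Nat.exists_eq_add_of_le h
  rw [window_add, window_add]
  exact ⟨_, _, rfl⟩

lemma mem_facN_of_infix {v w : List A} (hw : w ∈ FacN u) (h : v <:+: w) : v ∈ FacN u := by
  obtain ⟨i, hi⟩ := mem_facN_iff.mp hw
  obtain ⟨s, t, rfl⟩ := h
  exact mem_facN_iff.mpr ⟨_, window_eq_of_eq_append hi⟩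

end Window

section UnifRecAt

variable {u : ℕ → A}

lemma unifRec_iff_forall_unifRecAt [Finite A] : UnifRec u ↔ ∀ v ∈ FacN u, UnifRecAt u v := by
  refine ⟨fun h v hv => ?_, fun h n => ?_⟩
  · obtain ⟨m, hm⟩ := h v.length
    refine ⟨m, fun w hw hmw => ?_⟩
    obtain ⟨i, hi⟩ := mem_facN_iff.mp hw
    have hsub : window u i m <:+: w := by
      have := window_infix_window (u := u) (i := i) (t := 0) (n := m) (m := w.length) (by omega)
      rwa [Nat.add_zero, hi] at this
    exact (hm v hv rfl _ (window_mem_facN u i m) (length_window ..)).trans hsub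
  · choose! M hM using h
    have hfin : {v ∈ FacN u | v.length = n}.Finite :=
      (List.finite_length_le A n).subset fun v hv => hv.2.le
    obtain ⟨m, hm⟩ := (hfin.image M).bddAbove
    exact ⟨m, fun v hv hvn w hw hwm => hM v hv w hw (hwm ▸ hm ⟨v, ⟨hv, hvn⟩, rfl⟩)⟩

lemma UnifRecAt.finite_avoiding [Finite A] {v : List A} (h : UnifRecAt u v) :
    {w ∈ FacN u | ¬ v <:+: w}.Finite := by
  obtain ⟨m, hm⟩ := h
  refine (List.finite_length_lt A m).subset ?_
  rintro w ⟨hw, hvw⟩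
  exact lt_of_not_ge fun hmw => hvw (hm w hw hmw)

lemma unifRecAt_of_finite_avoiding {v : List A} (h : {w ∈ FacN u | ¬ v <:+: w}.Finite) :
    UnifRecAt u v := by
  obtain ⟨m, hm⟩ := (h.image List.length).bddAbove
  refine ⟨m + 1, fun w hw hmw => by_contra fun hvw => ?_⟩
  have := hm ⟨w, ⟨hw, hvw⟩, rfl⟩
  omega

lemma finite_of_ssubset_facN [Finite A] (h : ∀ v ∈ FacN u, UnifRecAt u v) {X : Set (List A)}
    (hX : X ⊂ FacN u) (hdc : ∀ a b : List A, b ∈ X → a <:+: b → a ∈ X) : X.Finite := by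
  obtain ⟨z, hz, hzX⟩ := exists_of_ssubset hX
  exact (h z hz).finite_avoiding.subset fun w hw =>
    ⟨hX.subset hw, fun hzw => hzX (hdc z w hw hzw)⟩

lemma unifRecAt_of_forall_ssubset_finite
    (hfin : ∀ X : Set (List A), X ⊂ FacN u →
      (∀ a b : List A, b ∈ X → a <:+: b → a ∈ X) → X.Finite)
    {v : List A} (hv : v ∈ FacN u) : UnifRecAt u v := by
  refine unifRecAt_of_finite_avoiding (hfin _ ?_ ?_)
  · exact (sep_subset _ _).ssubset_of_not_subset fun h => (h hv).2 List.infix_rfl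
  · rintro a b ⟨hb, hvb⟩ hab
    exact ⟨mem_facN_of_infix hb hab, fun hva => hvb (hva.trans hab)⟩

lemma inexh_facN (h : ∀ v ∈ FacN u, UnifRecAt u v) : Inexh (FacN u) := by
  refine ⟨⟨_, window_mem_facN u 0 0⟩, fun hu => ?_, fun v hv => ?_⟩
  · have h1 : window u 0 1 ∈ ({[]} : Set (List A)) := hu ▸ window_mem_facN u 0 1
    simpa using congrArg List.length h1
  · obtain ⟨i, hi⟩ := mem_facN_iff.mp hv
    obtain ⟨m, hm⟩ := h v hv
    obtain ⟨s, t, hst⟩ := hm _ (window_mem_facN u (i + v.length) m) (length_window ..).ge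
    refine ⟨window u (i + v.length) s.length, mem_facN_iff.mpr ⟨i, ?_⟩⟩
    simp only [List.length_append, length_window]
    rw [window_add, window_add, hi, ← add_assoc, window_eq_of_eq_append hst.symm]

lemma partiallyWellOrderedOn_facN [Finite A] (h : ∀ v ∈ FacN u, UnifRecAt u v) :
    (FacN u).PartiallyWellOrderedOn (· <:+: ·) := by
  refine partiallyWellOrderedOn_iff_exists_lt.mpr fun f hf => ?_
  obtain ⟨m, hm⟩ := h (f 0) (hf 0)
  by_cases hlong : ∃ n, m ≤ (f (n + 1)).length
  · obtain ⟨n, hn⟩ := hlong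
    exact ⟨0, n + 1, n.succ_pos, hm _ (hf _) hn⟩
  · obtain ⟨a, b, hab, hfab⟩ :=
      ((List.finite_length_lt A m).partiallyWellOrderedOn (r := (· <:+: ·))).exists_lt
        (f := fun n => f (n + 1)) fun n => lt_of_not_ge fun hn => hlong ⟨n, hn⟩
    exact ⟨a + 1, b + 1, by omega, hfab⟩

lemma isCompleteReturnWord_window {v : List A} {p q : ℕ} (hpq : p < q)
    (hp : window u p v.length = v) (hq : window u q v.length = v)
    (hgap : ∀ r, p < r → r < q → window u r v.length ≠ v) :
    IsCompleteReturnWord v (window u p (q - p + v.length)) := by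
  refine ⟨⟨window u (p + v.length) (q - p), by rw [Nat.add_comm (q - p), window_add, hp]⟩,
    ⟨window u p (q - p), by rw [window_add, Nat.add_sub_cancel' hpq.le, hq]⟩,
    by simp only [length_window]; omega, fun s t h => ?_⟩
  have hlen := congrArg List.length h
  simp only [length_window, List.length_append] at hlen
  by_contra! hst
  exact hgap (p + s.length) (by simp [List.length_pos_iff, hst.1])
    (by have := List.length_pos_iff.mpr hst.2; omega) (window_eq_of_eq_append h)

lemma exists_window_eq_of_inexh (hin : Inexh (FacN u)) {v : List A} (hv : v ∈ FacN u) (B : ℕ) :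
    ∃ i, B < i ∧ window u i v.length = v := by
  obtain ⟨p, hp⟩ := mem_facN_iff.mp hv
  set z := window u p (v.length + (B + 1)) with hz_def
  have hz : z = v ++ window u (p + v.length) (B + 1) := by rw [hz_def, window_add, hp]
  obtain ⟨y, hy⟩ := hin.2.2 z (window_mem_facN ..)
  obtain ⟨i, hi⟩ := mem_facN_iff.mp hy
  have hsplit : z ++ y ++ z = (z ++ y) ++ v ++ window u (p + v.length) (B + 1) := by
    rw [List.append_assoc (z ++ y) v, ← hz]
  refine ⟨i + (z ++ y).length, ?_, window_eq_of_eq_append (hi.trans hsplit)⟩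
  simp only [List.length_append, hz_def, length_window]
  omega

lemma exists_isCompleteReturnWord_length_gt (hin : Inexh (FacN u)) {v : List A}
    (hv : v ∈ FacN u) (hv' : ¬ UnifRecAt u v) (k : ℕ) :
    ∃ r ∈ FacN u, IsCompleteReturnWord v r ∧ k < r.length := by
  obtain ⟨a, ha⟩ := mem_facN_iff.mp hv
  simp only [UnifRecAt, not_exists, not_forall] at hv'
  obtain ⟨w, hw, hlen, hvw⟩ := hv' (a + k + v.length + 1)
  obtain ⟨j, hj⟩ := mem_facN_iff.mp hw
  have hfree : ∀ t, t + v.length ≤ w.length → window u (j + t) v.length ≠ v :=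
    fun t ht h => hvw (h ▸ hj ▸ window_infix_window ht)
  have haj : a < j := by
    by_contra! haj
    exact hfree (a - j) (by omega) (by rwa [Nat.add_sub_cancel' haj])
  obtain ⟨b, hjb, hb⟩ := exists_window_eq_of_inexh hin hv j
  obtain ⟨p, q, hpj, hjq, hp, hq, hgap⟩ :=
    Nat.exists_consecutive_around (P := fun i => window u i v.length = v) ha hb haj hjb.le
  have hwq : j + w.length < q + v.length := by
    by_contra! hqw
    exact hfree (q - j) (by omega) (by rwa [Nat.add_sub_cancel' hjq])
  refine ⟨_, window_mem_facN .., isCompleteReturnWord_window (by omega) hp hq hgap, ?_⟩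
  simp only [length_window]
  omega

lemma unifRecAt_of_inexh (hin : Inexh (FacN u))
    (hwqo : (FacN u).PartiallyWellOrderedOn (· <:+: ·)) {v : List A} (hv : v ∈ FacN u) :
    UnifRecAt u v := by
  by_contra hv'
  have hanti : IsAntichain (· <:+: ·) {r ∈ FacN u | IsCompleteReturnWord v r} :=
    fun r hr r' hr' hne h => hne (hr.2.eq_of_infix hr'.2 h)
  obtain ⟨m, hm⟩ := ((hanti.finite_of_partiallyWellOrderedOn
    (hwqo.mono (sep_subset _ _))).image List.length).bddAbove
  obtain ⟨r, hr, hrv, hlen⟩ := exists_isCompleteReturnWord_length_gt hin hv hv' m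
  exact hlen.not_ge (hm ⟨r, ⟨hr, hrv⟩, rfl⟩)

end UnifRecAt

end Words

theorem stmt3 {A : Type*} [Finite A] (u : ℕ → A) :
    (UnifRec u ↔ (Inexh (FacN u) ∧ WqoOn (· <:+: ·) (FacN u))) ∧
    (UnifRec u ↔ ((FacN u).Infinite ∧
      ∀ X : Set (List A), X ⊂ FacN u →
        (∀ a b : List A, b ∈ X → a <:+: b → a ∈ X) → X.Finite)) := by
  rw [unifRec_iff_forall_unifRecAt, wqoOn_iff_partiallyWellOrderedOn]
  exact ⟨⟨fun h => ⟨inexh_facN h, partiallyWellOrderedOn_facN h⟩,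
      fun ⟨hin, hwqo⟩ _ hv => unifRecAt_of_inexh hin hwqo hv⟩,
    ⟨fun h => ⟨facN_infinite u, fun _ hX hdc => finite_of_ssubset_facN h hX hdc⟩,
      fun ⟨_, hfin⟩ _ hv => unifRecAt_of_forall_ssubset_finite hfin hv⟩⟩
end

section
/- Let (w_i)_{i ∈ I} be an infinite family of finite 0-1 words that forms an antichain for the factor order (no w_i is a factor of w_j for i ≠ j) and such that no w_i begins with the letter 1. Then the graphs G_{1111·w_i} form an antichain under induced embedding: for i ≠ j, G_{1111·w_i} does not admit an induced embedding into G_{1111·w_j}. -/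
/-!
In `G_w` a vertex `q` is adjacent to its predecessor exactly when it is not adjacent to the
vertices below `q - 1`; its letter decides which. Hence, if `F` is an induced embedding of
`G_{1111·u}` into `G_{1111·v}` and `F x` lies at least two above both `F a` and `F b`, then `x`
sees `a` and `b` alike. Applied to the vertex of the prefix `1111·0` with the highest image, this
forces `F` to send `2, 3, 4, 5` to consecutive vertices `c + 2, …, c + 5`; the same principle
pushes `F k = c + k` up to the last vertex, so the letters of `u` reappear in `v` from position
`c` on. The one exception is `u = 01`: either `v` contains a `1`, and then `01` is a factor of `v`
since `v` begins with `0`, or `G_{1111·v}` has no independent set of size four, while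
`{0, 2, 4, 6}` is one in `G_{111101}`.
-/

/-- Adjacency rule of the graph associated with a 0-1 word `μ` (letters indexed from 1):
for `i < j`, `{i,j}` is an edge iff (`μ j = 1` and `j = i+1`) or (`μ j = 0` and `j ≠ i+1`). -/
def GmuAdj (μ : ℕ → Bool) (i j : ℕ) : Prop :=
  (i < j ∧ ((μ j = true ∧ j = i + 1) ∨ (μ j = false ∧ j ≠ i + 1))) ∨
  (j < i ∧ ((μ i = true ∧ i = j + 1) ∨ (μ i = false ∧ i ≠ j + 1)))

/-- The graph `G_μ` on `ℕ` associated with the 0-1 word `μ : {1,2,…} → {0,1}`. -/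
def Gmu (μ : ℕ → Bool) : SimpleGraph ℕ where
  Adj i j := GmuAdj μ i j
  symm := ⟨fun i j h => Or.symm h⟩
  loopless := ⟨fun i h => by
    rcases h with ⟨h1, _⟩ | ⟨h1, _⟩ <;> exact lt_irrefl i h1⟩

/-- Adjacency rule for the graph of a finite 0-1 word `w = w₁…wₙ` on vertices `{0,…,n}`. -/
def GWAdj (w : List Bool) (i j : ℕ) : Prop :=
  (i < j ∧ ((w.getD (j - 1) false = true ∧ j = i + 1) ∨
            (w.getD (j - 1) false = false ∧ j ≠ i + 1))) ∨
  (j < i ∧ ((w.getD (i - 1) false = true ∧ i = j + 1) ∨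
            (w.getD (i - 1) false = false ∧ i ≠ j + 1)))

/-- The graph `G_w` of a finite 0-1 word `w = w₁…wₙ`, on the vertex set `{0,1,…,n}`. -/
def GW (w : List Bool) : SimpleGraph (Fin (w.length + 1)) where
  Adj i j := GWAdj w i j
  symm := ⟨fun i j h => Or.symm h⟩
  loopless := ⟨fun i h => by
    rcases h with ⟨h1, _⟩ | ⟨h1, _⟩ <;> exact lt_irrefl (i : ℕ) h1⟩

/-- `M` is a module of the graph `G`: every vertex outside `M` is adjacent either to all
vertices of `M` or to none of them. -/
def IsModule {V : Type*} (G : SimpleGraph V) (M : Set V) : Prop :=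
  ∀ x ∉ M, (∀ a ∈ M, G.Adj x a) ∨ (∀ a ∈ M, ¬ G.Adj x a)

/-- A graph is prime if its only modules are the empty set, singletons and the whole
vertex set. -/
def GraphPrime {V : Type*} (G : SimpleGraph V) : Prop :=
  ∀ M : Set V, IsModule G M → M = ∅ ∨ (∃ a, M = {a}) ∨ M = Set.univ


theorem List.infix_of_getD_eq {α : Type*} {l₁ l₂ : List α} (d : α) (c : ℕ)
    (hlen : l₁.length + c ≤ l₂.length) (h : ∀ i < l₁.length, l₁.getD i d = l₂.getD (i + c) d) :
    l₁ <:+: l₂ :=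
  List.infix_iff_getElem?.2 ⟨c, hlen, fun i hi => by
    have := h i hi
    rw [List.getD_eq_getElem _ _ hi, List.getD_eq_getElem _ _ (by omega)] at this
    rw [List.getElem?_eq_getElem (by omega), this]⟩

theorem List.infix_false_true_of_true_mem :
    ∀ {l : List Bool}, true ∈ l → [false, true] <:+: false :: l
  | true :: l, _ => (List.prefix_append [false, true] l).isInfix
  | false :: _, h => List.infix_cons (infix_false_true_of_true_mem (by simpa using h))

theorem List.getD_replicate_append_add {α : Type*} (n : ℕ) (a d : α) (l : List α) (k : ℕ) :
    (List.replicate n a ++ l).getD (k + n) d = l.getD k d := by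
  rw [List.getD_append_right _ _ _ _ (by simp), List.length_replicate, Nat.add_sub_cancel]

theorem List.getD_replicate_append_of_lt {α : Type*} {n k : ℕ} (a d : α) (l : List α)
    (hk : k < n) : (List.replicate n a ++ l).getD k d = a := by
  rw [List.getD_append _ _ _ _ (by simpa using hk), List.getD_replicate a hk]

theorem List.getD_eq_false_of_true_not_mem {l : List Bool} (hl : true ∉ l) (k : ℕ) :
    l.getD k false = false := by
  rcases lt_or_ge k l.length with hk | hk
  · rw [List.getD_eq_getElem _ _ hk]
    exact Bool.eq_false_iff.2 fun h => hl (h ▸ List.getElem_mem hk)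
  · exact List.getD_eq_default _ _ hk

section Adjacency

variable {w : List Bool} {p q : ℕ}

theorem gwAdj_comm : GWAdj w p q ↔ GWAdj w q p := or_comm

theorem gwAdj_succ_iff : GWAdj w p (p + 1) ↔ w.getD p false = true := by
  simp [GWAdj]

theorem gwAdj_iff_of_add_two_le (h : p + 2 ≤ q) :
    GWAdj w p q ↔ w.getD (q - 1) false = false := by
  unfold GWAdj
  constructor
  · rintro (⟨-, ⟨-, rfl⟩ | ⟨hq, -⟩⟩ | ⟨hqp, -⟩)
    · omega
    · exact hq
    · omega
  · exact fun hq => Or.inl ⟨by omega, Or.inr ⟨hq, by omega⟩⟩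

theorem gwAdj_iff_not_gwAdj_succ (h : p < q) :
    GWAdj w p (q + 1) ↔ ¬ GWAdj w q (q + 1) := by
  simp [gwAdj_iff_of_add_two_le (show p + 2 ≤ q + 1 by omega), gwAdj_succ_iff]

theorem gwAdj_congr_left {p' : ℕ} (hp : p + 2 ≤ q) (hp' : p' + 2 ≤ q) :
    GWAdj w p q ↔ GWAdj w p' q := by
  rw [gwAdj_iff_of_add_two_le hp, gwAdj_iff_of_add_two_le hp']

theorem gwAdj_append_iff {w' : List Bool} (hp : p ≤ w.length) (hq : q ≤ w.length) :
    GWAdj (w ++ w') p q ↔ GWAdj w p q := by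
  have key : ∀ {r}, 0 < r → r ≤ w.length →
      (w ++ w').getD (r - 1) false = w.getD (r - 1) false :=
    fun _ hr => List.getD_append _ _ _ _ (by omega)
  unfold GWAdj
  refine or_congr (and_congr_right fun _ => ?_) (and_congr_right fun _ => ?_)
  · rw [key (by omega) hq]
  · rw [key (by omega) hp]

instance : DecidableRel (GWAdj w) := fun p q => by unfold GWAdj; infer_instance

end Adjacency

/-- An induced embedding of `G_w` into `G_{w'}`, as a map of vertex numbers; only its values on
`0, …, w.length` matter. -/
structure IsGWEmbedding (w w' : List Bool) (F : ℕ → ℕ) : Prop where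
  gwAdj_iff : ∀ {k l}, k ≤ w.length → l ≤ w.length → (GWAdj w' (F k) (F l) ↔ GWAdj w k l)
  injOn : Set.InjOn F (Set.Iic w.length)
  mapsTo : Set.MapsTo F (Set.Iic w.length) (Set.Iic w'.length)

theorem SimpleGraph.Embedding.exists_isGWEmbedding {w w' : List Bool} (f : GW w ↪g GW w') :
    ∃ F, IsGWEmbedding w w' F := by
  have hval : ∀ {k}, k ≤ w.length → (Fin.ofNat (w.length + 1) k : ℕ) = k :=
    fun hk => Nat.mod_eq_of_lt (by omega)
  refine ⟨fun k => f (Fin.ofNat _ k), fun {k l} hk hl => ?_, fun k hk l hl h => ?_,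
    fun k _ => ?_⟩
  · have := f.map_adj_iff (v := Fin.ofNat _ k) (w := Fin.ofNat _ l)
    simp only [GW, hval hk, hval hl] at this
    exact this
  · have := congrArg Fin.val (f.injective (Fin.ext h))
    rwa [hval hk, hval hl] at this
  · exact Nat.lt_succ_iff.mp (f _).isLt

namespace IsGWEmbedding

variable {w w' : List Bool} {F : ℕ → ℕ}

theorem of_append {w₂ : List Bool} (hF : IsGWEmbedding (w ++ w₂) w' F) :
    IsGWEmbedding w w' F := by
  have hle : ∀ {k}, k ≤ w.length → k ≤ (w ++ w₂).length := fun hk => by simp; omega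
  refine ⟨fun hk hl => ?_, hF.injOn.mono fun k hk => hle hk, fun k hk => hF.mapsTo (hle hk)⟩
  rw [hF.gwAdj_iff (hle hk) (hle hl), gwAdj_append_iff hk hl]

theorem gwAdj_congr_left (hF : IsGWEmbedding w w' F) {a b s : ℕ} (ha : a ≤ w.length)
    (hb : b ≤ w.length) (hs : s ≤ w.length) (hFa : F a + 2 ≤ F s) (hFb : F b + 2 ≤ F s) :
    GWAdj w a s ↔ GWAdj w b s := by
  rw [← hF.gwAdj_iff ha hs, ← hF.gwAdj_iff hb hs]
  exact _root_.gwAdj_congr_left hFa hFb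

theorem gwAdj_iff_not_gwAdj_succ (hF : IsGWEmbedding w w' F) {x k : ℕ} (hx : x ≤ w.length)
    (hk : k + 1 ≤ w.length) (hsucc : F k + 1 = F (k + 1)) (hFx : F x + 2 ≤ F (k + 1)) :
    GWAdj w x (k + 1) ↔ ¬ GWAdj w k (k + 1) := by
  rw [← hF.gwAdj_iff hx hk, ← hF.gwAdj_iff (by omega) hk, ← hsucc]
  exact _root_.gwAdj_iff_not_gwAdj_succ (by omega)

theorem getD_eq_of_succ (hF : IsGWEmbedding w w' F) {k : ℕ} (hk : k + 1 ≤ w.length)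
    (hsucc : F k + 1 = F (k + 1)) : w'.getD (F k) false = w.getD k false := by
  rw [Bool.eq_iff_iff, ← gwAdj_succ_iff, ← gwAdj_succ_iff, hsucc, hF.gwAdj_iff (by omega) hk]

theorem add_one_eq_of_gwAdj_iff_not (hF : IsGWEmbedding w w' F) {a b b' s : ℕ}
    (ha : a ≤ w.length) (hb : b ≤ w.length) (hb' : b' ≤ w.length) (hs : s ≤ w.length)
    (hbb' : b ≠ b') (hab : GWAdj w a s ↔ ¬ GWAdj w b s) (hab' : GWAdj w a s ↔ ¬ GWAdj w b' s)
    (hFa : F a < F s) (hFb : F b < F s) (hFb' : F b' < F s) : F a + 1 = F s := by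
  have hFbb' : F b ≠ F b' := fun h => hbb' (hF.injOn hb hb' h)
  by_contra hne
  rcases (by omega : F b + 2 ≤ F s ∨ F b' + 2 ≤ F s) with h | h
  · exact iff_not_self (hab.trans (not_congr (hF.gwAdj_congr_left hb ha hs h (by omega))))
  · exact iff_not_self (hab'.trans (not_congr (hF.gwAdj_congr_left hb' ha hs h (by omega))))

theorem not_lt_of_gwAdj_of_not_gwAdj (hF : IsGWEmbedding w w' F) {a a' b b' s : ℕ}
    (ha : a ≤ w.length) (ha' : a' ≤ w.length) (hb : b ≤ w.length) (hb' : b' ≤ w.length)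
    (hs : s ≤ w.length) (haa' : a ≠ a') (hbb' : b ≠ b') (hsa : GWAdj w a s)
    (hsa' : GWAdj w a' s) (hsb : ¬ GWAdj w b s) (hsb' : ¬ GWAdj w b' s) :
    ¬ (F a < F s ∧ F a' < F s ∧ F b < F s ∧ F b' < F s) := by
  rintro ⟨hFa, hFa', hFb, hFb'⟩
  have e := hF.add_one_eq_of_gwAdj_iff_not ha hb hb' hs hbb' (iff_of_true hsa hsb)
    (iff_of_true hsa hsb') hFa hFb hFb'
  have e' := hF.add_one_eq_of_gwAdj_iff_not ha' hb hb' hs hbb' (iff_of_true hsa' hsb)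
    (iff_of_true hsa' hsb') hFa' hFb hFb'
  exact haa' (hF.injOn ha ha' (by omega))

theorem consecutive_of_anchor (hF : IsGWEmbedding [true, true, true, true, false] w' F) :
    F 2 + 1 = F 3 ∧ F 3 + 1 = F 4 ∧ F 4 + 1 = F 5 := by
  set P := [true, true, true, true, false]
  have hlt : ∀ {j s}, j ≤ 5 ∧ s ≤ 5 ∧ j ≠ s ∧ F j ≤ F s → F j < F s :=
    fun ⟨hj, hs, hjs, h⟩ => lt_of_le_of_ne h fun e => hjs (hF.injOn hj hs e)
  have hpred : ∀ {a b b' s}, (a ≤ 5 ∧ b ≤ 5 ∧ b' ≤ 5 ∧ s ≤ 5 ∧ a ≠ s ∧ b ≠ s ∧ b' ≠ s ∧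
      b ≠ b' ∧ (GWAdj P a s ↔ ¬ GWAdj P b s) ∧ (GWAdj P a s ↔ ¬ GWAdj P b' s)) →
      F a ≤ F s ∧ F b ≤ F s ∧ F b' ≤ F s → F a + 1 = F s :=
    fun ⟨ha, hb, hb', hs, has, hbs, hb's, hbb', h, h'⟩ ⟨la, lb, lb'⟩ =>
      hF.add_one_eq_of_gwAdj_iff_not ha hb hb' hs hbb' h h' (hlt ⟨ha, hs, has, la⟩)
        (hlt ⟨hb, hs, hbs, lb⟩) (hlt ⟨hb', hs, hb's, lb'⟩)
  have hnotMax : ∀ {a a' b b' s}, (a ≤ 5 ∧ a' ≤ 5 ∧ b ≤ 5 ∧ b' ≤ 5 ∧ s ≤ 5 ∧ a ≠ s ∧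
      a' ≠ s ∧ b ≠ s ∧ b' ≠ s ∧ a ≠ a' ∧ b ≠ b' ∧ GWAdj P a s ∧ GWAdj P a' s ∧
      ¬ GWAdj P b s ∧ ¬ GWAdj P b' s) → ¬ (F a ≤ F s ∧ F a' ≤ F s ∧ F b ≤ F s ∧ F b' ≤ F s) :=
    fun ⟨ha, ha', hb, hb', hs, has, ha's, hbs, hb's, haa', hbb', h1, h2, h3, h4⟩
        ⟨l1, l2, l3, l4⟩ =>
      hF.not_lt_of_gwAdj_of_not_gwAdj ha ha' hb hb' hs haa' hbb' h1 h2 h3 h4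
        ⟨hlt ⟨ha, hs, has, l1⟩, hlt ⟨ha', hs, ha's, l2⟩, hlt ⟨hb, hs, hbs, l3⟩,
          hlt ⟨hb', hs, hb's, l4⟩⟩
  obtain ⟨s, hs, hmax⟩ := (Finset.range 6).exists_max_image F ⟨0, by simp⟩
  simp only [Finset.mem_range] at hs
  have m : ∀ j ≤ 5, j ≠ s → F j < F s :=
    fun j hj hjs => hlt ⟨hj, by omega, hjs, hmax j (by simp; omega)⟩
  have m0 := m 0; have m1 := m 1; have m2 := m 2; have m3 := m 3; have m4 := m 4; have m5 := m 5
  -- Each vertex other than 4 and 5 has two neighbours and two non-neighbours in `G_{11110}`.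
  interval_cases s
  · exact (hnotMax (a := 1) (a' := 5) (b := 2) (b' := 3) (s := 0) (by decide) (by omega)).elim
  · exact (hnotMax (a := 0) (a' := 2) (b := 3) (b' := 4) (s := 1) (by decide) (by omega)).elim
  · exact (hnotMax (a := 1) (a' := 3) (b := 0) (b' := 4) (s := 2) (by decide) (by omega)).elim
  · exact (hnotMax (a := 2) (a' := 4) (b := 0) (b' := 1) (s := 3) (by decide) (by omega)).elim
  · have h34 := hpred (a := 3) (b := 0) (b' := 1) (s := 4) (by decide) (by omega)
    exact (hnotMax (a := 2) (a' := 5) (b := 0) (b' := 1) (s := 3) (by decide) (by omega)).elim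
  · have h45 := hpred (a := 4) (b := 0) (b' := 1) (s := 5) (by decide) (by omega)
    have h34 := hpred (a := 3) (b := 0) (b' := 1) (s := 4) (by decide) (by omega)
    obtain ⟨l0, l1, l2⟩ : F 0 < F 4 ∧ F 1 < F 4 ∧ F 2 < F 4 :=
      ⟨hlt (by omega), hlt (by omega), hlt (by omega)⟩
    have h23 := hpred (a := 2) (b := 0) (b' := 1) (s := 3) (by decide) (by omega)
    exact ⟨h23, h34, h45⟩

end IsGWEmbedding

section Window

variable {w w' : List Bool} {F : ℕ → ℕ} {c t : ℕ}

theorem IsGWEmbedding.lt_or_lt_of_window (hF : IsGWEmbedding w w' F)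
    (hc : ∀ k, 2 ≤ k → k ≤ t → F k = c + k) {x : ℕ} (hxt : t < x) (hxw : x ≤ w.length) :
    F x < c + 2 ∨ c + t < F x := by
  by_contra! h
  have hk := hc (F x - c) (by omega) (by omega)
  have := hF.injOn (show x ≤ w.length from hxw) (show F x - c ≤ w.length by omega)
    (by rw [hk]; omega)
  omega

theorem IsGWEmbedding.eq_add_of_window (hF : IsGWEmbedding w w' F) (ht : 3 ≤ t)
    (htw : t + 1 ≤ w.length) (hc : ∀ k, 2 ≤ k → k ≤ t → F k = c + k)
    (hlow : c + 2 ≤ F (t + 1)) : F (t + 1) = c + (t + 1) := by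
  by_contra hne
  have habove : c + t + 2 ≤ F (t + 1) := by
    rcases hF.lt_or_lt_of_window hc (by omega : t < t + 1) htw with h | h <;> omega
  have hsame := hF.gwAdj_congr_left (a := t - 1) (b := t) (s := t + 1) (by omega) (by omega)
    htw (by rw [hc (t - 1) (by omega) (by omega)]; omega) (by rw [hc t (by omega) le_rfl]; omega)
  exact iff_not_self (hsame.symm.trans (_root_.gwAdj_iff_not_gwAdj_succ (by omega)))

end Window

section Anchor

variable {u w' : List Bool} {F : ℕ → ℕ} {c : ℕ}

theorem IsGWEmbedding.add_two_le_of_seven_le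
    (hF : IsGWEmbedding ([true, true, true, true, false] ++ u) w' F)
    (hc : ∀ k, 2 ≤ k → k ≤ 5 → F k = c + k) {x : ℕ} (hx : 7 ≤ x)
    (hxw : x ≤ ([true, true, true, true, false] ++ u).length) : c + 2 ≤ F x := by
  by_contra! hlow
  have h3 := hF.gwAdj_iff_not_gwAdj_succ (k := 2) hxw (by omega)
    (by rw [hc 2 le_rfl (by omega), hc 3 (by omega) (by omega)])
    (by rw [hc 3 (by omega) (by omega)]; omega)
  have h5 := hF.gwAdj_iff_not_gwAdj_succ (k := 4) hxw (by omega)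
    (by rw [hc 4 (by omega) (by omega), hc 5 (by omega) le_rfl])
    (by rw [hc 5 (by omega) le_rfl]; omega)
  have h35 : GWAdj ([true, true, true, true, false] ++ u) 3 x ↔ GWAdj _ 5 x :=
    _root_.gwAdj_congr_left (by omega) (by omega)
  have a23 : GWAdj ([true, true, true, true, false] ++ u) 2 3 :=
    (gwAdj_append_iff (by simp) (by simp)).2 (by decide)
  have a45 : ¬ GWAdj ([true, true, true, true, false] ++ u) 4 5 :=
    fun h => absurd ((gwAdj_append_iff (by simp) (by simp)).1 h) (by decide)
  exact h3.mp (gwAdj_comm.mp (h35.mpr (gwAdj_comm.mp (h5.mpr a45)))) a23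

theorem IsGWEmbedding.add_two_le_six
    (hF : IsGWEmbedding ([true, true, true, true, false] ++ u) w' F) (hu : u ≠ [])
    (hu' : u ≠ [true]) (hc : ∀ k, 2 ≤ k → k ≤ 5 → F k = c + k) : c + 2 ≤ F 6 := by
  by_contra! hlow
  obtain ⟨b, u', rfl⟩ := List.exists_cons_of_ne_nil hu
  rcases u' with _ | ⟨b', u''⟩
  · obtain rfl : b = false := by simpa using hu'
    have h3 := hF.gwAdj_iff_not_gwAdj_succ (x := 6) (k := 2) (by simp) (by simp)
      (by rw [hc 2 le_rfl (by omega), hc 3 (by omega) (by omega)])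
      (by rw [hc 3 (by omega) (by omega)]; omega)
    exact h3.mp (by decide) (by decide)
  · have hlen : ([true, true, true, true, false] ++ b :: b' :: u'').length = u''.length + 7 := by
      simp
    -- Vertex 7 is then mapped above the window, where it would see 4 and 6 alike.
    have h7 : c + 5 < F 7 := by
      rcases hF.lt_or_lt_of_window hc (x := 7) (by omega) (by omega) with h | h
      · exact absurd (hF.add_two_le_of_seven_le hc le_rfl (by omega)) (by omega)
      · exact h
    have hsame := hF.gwAdj_congr_left (a := 4) (b := 6) (s := 7) (by omega) (by omega)
      (by omega) (by rw [hc 4 (by omega) (by omega)]; omega) (by omega)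
    exact iff_not_self (hsame.symm.trans (_root_.gwAdj_iff_not_gwAdj_succ (by omega)))

theorem IsGWEmbedding.eq_add_of_anchor
    (hF : IsGWEmbedding ([true, true, true, true, false] ++ u) w' F) (hu : u ≠ [true])
    (hc : ∀ k, 2 ≤ k → k ≤ 5 → F k = c + k) :
    ∀ k, 2 ≤ k → k ≤ ([true, true, true, true, false] ++ u).length → F k = c + k := by
  have hlen : ([true, true, true, true, false] ++ u).length = u.length + 5 := by simp
  suffices h : ∀ t, 5 ≤ t → t ≤ ([true, true, true, true, false] ++ u).length →
      ∀ k, 2 ≤ k → k ≤ t → F k = c + k from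
    fun k hk hkw => if h5 : k ≤ 5 then hc k hk h5 else h k (by omega) hkw k hk le_rfl
  intro t ht
  induction t, ht using Nat.le_induction with
  | base => exact fun _ => hc
  | succ t ht ih =>
    intro htw
    have hwin := ih (by omega)
    have hlow : c + 2 ≤ F (t + 1) := by
      rcases (by omega : t + 1 = 6 ∨ 7 ≤ t + 1) with h6 | h7
      · rw [h6]
        exact hF.add_two_le_six (List.ne_nil_of_length_pos (by omega)) hu hc
      · exact hF.add_two_le_of_seven_le hc h7 htw
    have hnext := hF.eq_add_of_window (by omega) htw hwin hlow
    intro k hk hkt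
    rcases Nat.lt_or_eq_of_le hkt with hkt | rfl
    · exact hwin k hk (by omega)
    · exact hnext

end Anchor

theorem infix_of_isGWEmbedding {u v : List Bool} {F : ℕ → ℕ}
    (hF : IsGWEmbedding (List.replicate 4 true ++ false :: u) (List.replicate 4 true ++ v) F)
    (hu : u ≠ [true]) : false :: u <:+: v := by
  have hF' : IsGWEmbedding ([true, true, true, true, false] ++ u) (List.replicate 4 true ++ v) F :=
    hF
  have hlen : ([true, true, true, true, false] ++ u).length = u.length + 5 := by simp
  obtain ⟨h23, h34, h45⟩ := hF'.of_append.consecutive_of_anchor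
  -- `F 4` is followed by a `0` in `1111·v`, so it lies past the leading `1111`.
  obtain ⟨c, hc4⟩ : ∃ c, F 4 = c + 4 := by
    refine ⟨F 4 - 4, (Nat.sub_add_cancel ?_).symm⟩
    by_contra h
    have := hF'.getD_eq_of_succ (k := 4) (by omega) h45
    rw [List.getD_replicate_append_of_lt true false v (by omega)] at this
    exact absurd this (by simp)
  have hc := hF'.eq_add_of_anchor hu (c := c) fun k hk hk5 => by interval_cases k <;> omega
  refine List.infix_of_getD_eq false c ?_ fun i hi => ?_
  · have := hF'.mapsTo (show u.length + 5 ≤ _ by omega)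
    simp only [Set.mem_Iic, hc _ (by omega) (by omega : u.length + 5 ≤ _), List.length_append,
      List.length_replicate] at this
    simp only [List.length_cons]
    omega
  · simp only [List.length_cons] at hi
    have := hF'.getD_eq_of_succ (k := i + 4) (by omega)
      (by rw [hc (i + 4) (by omega) (by omega), hc (i + 4 + 1) (by omega) (by omega)]; omega)
    rw [hc (i + 4) (by omega) (by omega), show c + (i + 4) = i + c + 4 by omega,
      List.getD_replicate_append_add] at this
    exact (List.getD_replicate_append_add 4 true false (false :: u) i).symm.trans this.symm

theorem not_isGWEmbedding_of_true_not_mem {v : List Bool} {F : ℕ → ℕ} (hv : true ∉ v) :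
    ¬ IsGWEmbedding (List.replicate 4 true ++ [false, true]) (List.replicate 4 true ++ v) F := by
  intro hF
  have hletter : ∀ k, (List.replicate 4 true ++ v).getD k false = decide (k < 4) := by
    intro k
    rcases lt_or_ge k 4 with hk | hk
    · rw [List.getD_replicate_append_of_lt true false v hk, decide_eq_true hk]
    · obtain ⟨k, rfl⟩ := Nat.exists_eq_add_of_le' hk
      rw [List.getD_replicate_append_add, List.getD_eq_false_of_true_not_mem hv,
        decide_eq_false (by omega)]
  have hV : ∀ {x y}, x < y → ¬ GWAdj (List.replicate 4 true ++ v) x y →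
      (x + 2 ≤ y ∧ y ≤ 4) ∨ (5 ≤ y ∧ x + 1 = y) := by
    intro x y hxy h
    rcases (by omega : y = x + 1 ∨ x + 2 ≤ y) with rfl | h2
    · rw [gwAdj_succ_iff, hletter, decide_eq_true_iff] at h
      omega
    · rw [gwAdj_iff_of_add_two_le h2, hletter, decide_eq_false_iff_not, not_not] at h
      omega
  have hpair : ∀ j k, (j ≤ 6 ∧ k ≤ 6 ∧ j ≠ k ∧
      ¬ GWAdj (List.replicate 4 true ++ [false, true]) j k) →
      (F j + 2 ≤ F k ∧ F k ≤ 4) ∨ (5 ≤ F k ∧ F j + 1 = F k) ∨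
      (F k + 2 ≤ F j ∧ F j ≤ 4) ∨ (5 ≤ F j ∧ F k + 1 = F j) := by
    rintro j k ⟨hj, hk, hjk, h⟩
    rw [← hF.gwAdj_iff hj hk] at h
    have hne : F j ≠ F k := fun e => hjk (hF.injOn hj hk e)
    rcases lt_or_gt_of_ne hne with hlt | hlt
    · have := hV hlt h
      omega
    · have := hV hlt (fun h' => h (gwAdj_comm.mp h'))
      omega
  have := hpair 0 2 (by decide); have := hpair 0 4 (by decide); have := hpair 0 6 (by decide)
  have := hpair 2 4 (by decide); have := hpair 2 6 (by decide); have := hpair 4 6 (by decide)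
  omega

theorem cons_false_infix_of_isGWEmbedding {u v : List Bool} {F : ℕ → ℕ}
    (hF : IsGWEmbedding (List.replicate 4 true ++ false :: u)
      (List.replicate 4 true ++ false :: v) F) :
    false :: u <:+: false :: v := by
  by_cases hu : u = [true]
  · subst hu
    by_cases hv : true ∈ v
    · exact List.infix_false_true_of_true_mem hv
    · exact absurd hF (not_isGWEmbedding_of_true_not_mem (by simpa using hv))
  · exact infix_of_isGWEmbedding hF hu

theorem stmt13 {I : Type*} [Infinite I] (w : I → List Bool)
    (hanti : ∀ i j : I, i ≠ j → ¬ (w i <:+: w j))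
    (hhead : ∀ i : I, (w i).head? ≠ some true) :
    ∀ i j : I, i ≠ j →
      ¬ Nonempty (GW (List.replicate 4 true ++ w i) ↪g
                  GW (List.replicate 4 true ++ w j)) := by
  have hcons : ∀ k, ∃ u, w k = false :: u := by
    intro k
    obtain ⟨k', hk'⟩ := exists_ne k
    match h : w k with
    | [] => exact absurd (h ▸ List.nil_infix) (hanti k k' hk'.symm)
    | true :: _ => exact absurd (by simp [h]) (hhead k)
    | false :: u => exact ⟨u, rfl⟩
  rintro i j hij ⟨f⟩
  obtain ⟨u, hu⟩ := hcons i
  obtain ⟨v, hv⟩ := hcons j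
  obtain ⟨F, hF⟩ := f.exists_isGWEmbedding
  rw [hu, hv] at hF
  exact hanti i j hij (hu ▸ hv ▸ cons_false_infix_of_isGWEmbedding hF)
end
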